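/- arXiv:1901.04272 — 3 statements merged into one kernel-verified Lean document; each statement's English description precedes it below -/
import Mathlib

section
/- For all real numbers Θ > 1, O ≥ 0 and p ≥ 0, we have min{O + p, 2O − (2/Θ)·p} ≤ (1 + Θ/(Θ+2))·O. -/
/-! The minimum of two numbers is at most any convex combination of them. With weights
`2 / (Θ + 2)` and `Θ / (Θ + 2)` the `p`-terms of `O + p` and `2 * O - (2 / Θ) * p` cancel,
and the combination is exactly `(1 + Θ / (Θ + 2)) * O`. -/

theorem stmt_0_general (Θ O p : ℝ) (hΘ : 1 < Θ) :
    min (O + p) (2 * O - (2 / Θ) * p) ≤ (1 + Θ / (Θ + 2)) * O := by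
  have hΘ₀ : 0 < Θ := by linarith
  have hweights : 2 / (Θ + 2) + Θ / (Θ + 2) = 1 := by field_simp; ring
  calc min (O + p) (2 * O - (2 / Θ) * p)
      ≤ 2 / (Θ + 2) * (O + p) + Θ / (Θ + 2) * (2 * O - (2 / Θ) * p) :=
        Convex.min_le_combo _ _ (by positivity) (by positivity) hweights
    _ = (1 + Θ / (Θ + 2)) * O := by field_simp; ring

theorem stmt_0 (Θ O p : ℝ) (hΘ : 1 < Θ) (hO : 0 ≤ O) (hp : 0 ≤ p) :
    min (O + p) (2 * O - (2 / Θ) * p) ≤ (1 + Θ / (Θ + 2)) * O :=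
  stmt_0_general Θ O p hΘ
end

section
/- There exists a unique real number Θ* > 1 such that (2Θ*² + 2Θ*)/(Θ*² + Θ* − 2) = Θ* + 1 − (Θ*−1)/(3Θ*+3), and this Θ* satisfies 2 < Θ* < (1+√13)/2. -/
/-!
Clearing denominators turns the defining equation, for `Θ > 1`, into the quartic
`3Θ⁴ + 2Θ³ - 9Θ² - 12Θ - 8 = 0`. The quartic is negative on `(1, 2]`, strictly increasing on
`[2, ∞)`, and positive at `φ = (1 + √13)/2`: there `φ² = φ + 3` reduces it to `8φ + 7`.
So it has exactly one root above `1`, and that root lies in `(2, φ)`.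
-/

namespace Smartstart

def quartic (t : ℝ) : ℝ := 3 * t ^ 4 + 2 * t ^ 3 - 9 * t ^ 2 - 12 * t - 8

theorem equation_iff_quartic_eq_zero {Θ : ℝ} (h : 1 < Θ) :
    (2 * Θ ^ 2 + 2 * Θ) / (Θ ^ 2 + Θ - 2) = Θ + 1 - (Θ - 1) / (3 * Θ + 3) ↔
      quartic Θ = 0 := by
  have h₁ : Θ ^ 2 + Θ - 2 ≠ 0 := by nlinarith
  have h₂ : 3 * Θ + 3 ≠ 0 := by linarith
  rw [div_eq_iff h₁, sub_div' h₂, div_mul_eq_mul_div, eq_div_iff h₂, quartic]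
  constructor <;> intro H <;> linear_combination -H

theorem quartic_neg_of_mem_Ioc {t : ℝ} (ht : t ∈ Set.Ioc 1 2) : quartic t < 0 := by
  obtain ⟨h₁, h₂⟩ := ht
  unfold quartic
  nlinarith [mul_nonneg (sub_nonneg.2 h₂) (sub_pos.2 h₁).le, mul_pos (sub_pos.2 h₁) (sub_pos.2 h₁)]

theorem strictMonoOn_quartic : StrictMonoOn quartic (Set.Ici 2) := by
  intro a (ha : 2 ≤ a) b (hb : 2 ≤ b) hab
  have hpos : 0 < 3 * (a ^ 3 + a ^ 2 * b + a * b ^ 2 + b ^ 3) + 2 * (a ^ 2 + a * b + b ^ 2)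
      - 9 * (a + b) - 12 := by
    nlinarith [mul_nonneg (sub_nonneg.2 ha) (sub_nonneg.2 hb),
      mul_nonneg (mul_nonneg (sub_nonneg.2 ha) (sub_nonneg.2 hb)) (sub_nonneg.2 ha),
      mul_nonneg (mul_nonneg (sub_nonneg.2 ha) (sub_nonneg.2 hb)) (sub_nonneg.2 hb)]
  have hfac : quartic b - quartic a = (b - a) * (3 * (a ^ 3 + a ^ 2 * b + a * b ^ 2 + b ^ 3)
      + 2 * (a ^ 2 + a * b + b ^ 2) - 9 * (a + b) - 12) := by
    unfold quartic; ring
  nlinarith [mul_pos (sub_pos.2 hab) hpos]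

noncomputable def upperRoot : ℝ := (1 + √13) / 2

theorem upperRoot_sq : upperRoot ^ 2 = upperRoot + 3 := by
  unfold upperRoot
  linear_combination Real.sq_sqrt (show (0 : ℝ) ≤ 13 by norm_num) / 4

theorem two_lt_upperRoot : 2 < upperRoot := by
  have : 3 < √13 := by
    rw [show (3 : ℝ) = √(3 ^ 2) by simp]
    exact Real.sqrt_lt_sqrt (by norm_num) (by norm_num)
  unfold upperRoot
  linarith

theorem quartic_upperRoot_pos : 0 < quartic upperRoot := by
  have hval : quartic upperRoot = 8 * upperRoot + 7 := by
    unfold quartic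
    linear_combination (3 * upperRoot ^ 2 + 5 * upperRoot + 5) * upperRoot_sq
  linarith [two_lt_upperRoot]

theorem exists_quartic_eq_zero : ∃ c ∈ Set.Icc 2 upperRoot, quartic c = 0 := by
  have hcont : ContinuousOn quartic (Set.Icc 2 upperRoot) := by
    unfold quartic; fun_prop
  refine intermediate_value_Icc two_lt_upperRoot.le hcont ⟨?_, quartic_upperRoot_pos.le⟩
  norm_num [quartic]

theorem mem_Ioo_of_quartic_eq_zero {Θ : ℝ} (h : 1 < Θ) (hΘ : quartic Θ = 0) :
    Θ ∈ Set.Ioo 2 upperRoot := by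
  have h₂ : 2 < Θ := by
    by_contra! hle
    exact (quartic_neg_of_mem_Ioc ⟨h, hle⟩).ne hΘ
  refine ⟨h₂, ?_⟩
  by_contra! hge
  have := strictMonoOn_quartic.le_iff_le two_lt_upperRoot.le h₂.le |>.2 hge
  linarith [quartic_upperRoot_pos]

end Smartstart

open Smartstart in
theorem stmt_5 :
    (∃! Θ : ℝ, 1 < Θ ∧
      (2 * Θ ^ 2 + 2 * Θ) / (Θ ^ 2 + Θ - 2) = Θ + 1 - (Θ - 1) / (3 * Θ + 3)) ∧
    (∀ Θ : ℝ, 1 < Θ →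
      (2 * Θ ^ 2 + 2 * Θ) / (Θ ^ 2 + Θ - 2) = Θ + 1 - (Θ - 1) / (3 * Θ + 3) →
      2 < Θ ∧ Θ < (1 + Real.sqrt 13) / 2) := by
  obtain ⟨c, ⟨hc₂, -⟩, hc⟩ := exists_quartic_eq_zero
  have hc₁ : 1 < c := by linarith
  refine ⟨⟨c, ⟨hc₁, (equation_iff_quartic_eq_zero hc₁).2 hc⟩, ?_⟩, ?_⟩
  · rintro b ⟨hb₁, hb⟩
    have hb₀ := (equation_iff_quartic_eq_zero hb₁).1 hb
    exact strictMonoOn_quartic.injOn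
      (mem_Ioo_of_quartic_eq_zero hb₁ hb₀).1.le hc₂ (hb₀.trans hc.symm)
  · intro Θ h₁ hΘ
    exact mem_Ioo_of_quartic_eq_zero h₁ ((equation_iff_quartic_eq_zero h₁).1 hΘ)
end

section
/- Let Θ* be the unique real number greater than 1 solving (2Θ²+2Θ)/(Θ²+Θ−2) = Θ+1−(Θ−1)/(3Θ+3). Then ρ* := (2Θ*²+2Θ*)/(Θ*²+Θ*−2) satisfies 2.93 < ρ* < 2.94. -/
/-!
Clearing denominators, the defining equation of `Θ*` becomes the quartic
`3Θ⁴ + 2Θ³ - 9Θ² - 12Θ - 8 = 0`, which is negative on `(1, 2.05]` and positive on `[2.055, ∞)`;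
so `2.05 < Θ* < 2.055`. On that interval the right-hand side `Θ + 1 - (Θ - 1) / (3Θ + 3)`,
which equals `ρ*`, stays within `(2.93, 2.94)`.
-/

lemma smartstart_quartic_eq_zero {Θ : ℝ} (hΘ : 1 < Θ)
    (h : (2 * Θ ^ 2 + 2 * Θ) / (Θ ^ 2 + Θ - 2) = Θ + 1 - (Θ - 1) / (3 * Θ + 3)) :
    3 * Θ ^ 4 + 2 * Θ ^ 3 - 9 * Θ ^ 2 - 12 * Θ - 8 = 0 := by
  have hd₁ : Θ ^ 2 + Θ - 2 ≠ 0 := by nlinarith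
  have hd₂ : 3 * Θ + 3 ≠ 0 := by linarith
  rw [div_eq_iff hd₁] at h
  have hq := div_mul_cancel₀ (Θ - 1) hd₂
  linear_combination (-(3 * Θ + 3)) * h + (Θ ^ 2 + Θ - 2) * hq

lemma smartstart_quartic_neg {Θ : ℝ} (h₁ : 1 < Θ) (h₂ : Θ ≤ 2.05) :
    3 * Θ ^ 4 + 2 * Θ ^ 3 - 9 * Θ ^ 2 - 12 * Θ - 8 < 0 := by
  have ha : 0 ≤ (2.05 - Θ) * (Θ - 1) := mul_nonneg (by linarith) (by linarith)
  nlinarith [mul_nonneg ha (sq_nonneg Θ), mul_nonneg ha (by linarith : (0 : ℝ) ≤ Θ)]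

lemma smartstart_quartic_pos {Θ : ℝ} (h : 2.055 ≤ Θ) :
    0 < 3 * Θ ^ 4 + 2 * Θ ^ 3 - 9 * Θ ^ 2 - 12 * Θ - 8 := by
  have ha : 0 ≤ (Θ - 2.055) * (Θ - 1) := mul_nonneg (by linarith) (by linarith)
  nlinarith [mul_nonneg ha (sq_nonneg Θ), mul_nonneg ha (by linarith : (0 : ℝ) ≤ Θ)]

lemma smartstart_root_mem_Ioo {Θ : ℝ} (hΘ : 1 < Θ)
    (h : 3 * Θ ^ 4 + 2 * Θ ^ 3 - 9 * Θ ^ 2 - 12 * Θ - 8 = 0) : Θ ∈ Set.Ioo 2.05 2.055 := by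
  constructor
  · by_contra! hle
    exact (smartstart_quartic_neg hΘ hle).ne h
  · by_contra! hle
    exact (smartstart_quartic_pos hle).ne' h

lemma smartstart_rhs_mem_Ioo {Θ : ℝ} (hΘ : Θ ∈ Set.Icc 2.05 2.055) :
    Θ + 1 - (Θ - 1) / (3 * Θ + 3) ∈ Set.Ioo 2.93 2.94 := by
  obtain ⟨hlo, hhi⟩ := hΘ
  have hd : 0 < 3 * Θ + 3 := by linarith
  constructor
  · have : (Θ - 1) / (3 * Θ + 3) < Θ + 1 - 2.93 := by
      rw [div_lt_iff₀ hd]; nlinarith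
    linarith
  · have : Θ + 1 - 2.94 < (Θ - 1) / (3 * Θ + 3) := by
      rw [lt_div_iff₀ hd]; nlinarith
    linarith

theorem stmt_7_general (Θs : ℝ) (hΘs : 1 < Θs)
    (heq : (2 * Θs ^ 2 + 2 * Θs) / (Θs ^ 2 + Θs - 2) = Θs + 1 - (Θs - 1) / (3 * Θs + 3)) :
    2.93 < (2 * Θs ^ 2 + 2 * Θs) / (Θs ^ 2 + Θs - 2) ∧
      (2 * Θs ^ 2 + 2 * Θs) / (Θs ^ 2 + Θs - 2) < 2.94 := by
  have hroot := smartstart_root_mem_Ioo hΘs (smartstart_quartic_eq_zero hΘs heq)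
  rw [heq]
  exact smartstart_rhs_mem_Ioo (Set.Ioo_subset_Icc_self hroot)

theorem stmt_7 (Θs : ℝ) (hΘs : 1 < Θs)
    (heq : (2 * Θs ^ 2 + 2 * Θs) / (Θs ^ 2 + Θs - 2) = Θs + 1 - (Θs - 1) / (3 * Θs + 3))
    (huniq : ∀ Θ : ℝ, 1 < Θ →
      (2 * Θ ^ 2 + 2 * Θ) / (Θ ^ 2 + Θ - 2) = Θ + 1 - (Θ - 1) / (3 * Θ + 3) → Θ = Θs) :
    2.93 < (2 * Θs ^ 2 + 2 * Θs) / (Θs ^ 2 + Θs - 2) ∧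
      (2 * Θs ^ 2 + 2 * Θs) / (Θs ^ 2 + Θs - 2) < 2.94 :=
  stmt_7_general Θs hΘs heq
end
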